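/- Let A be a normal N×N complex matrix with ‖A‖ < 1 and let B be an N×N positive semidefinite matrix. Define S(T) = ∑_{k=0}^{T} A^k B (A†)^k and S(∞) = ∑_{k=0}^{∞} A^k B (A†)^k. Then for every integer T ≥ 0, tr(S(∞)) − tr(S(T)) ≤ ‖A‖^{2(T+1)} · tr[ (I − A†A)^{−1} B ]. -/

import Mathlib

open scoped Matrix.Norms.L2Operator ComplexOrder
open Matrix

/-- The trace norm (sum of singular values) of a square complex matrix,
realized as `tr √(Mᴴ M)`. -/
noncomputable def traceNorm {n : ℕ} (M : Matrix (Fin n) (Fin n) ℂ) : ℝ :=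
  (((((Matrix.posSemidef_conjTranspose_mul_self M).1.eigenvectorUnitary : Matrix (Fin n) (Fin n) ℂ) *
      diagonal (((↑) : ℝ → ℂ) ∘ Real.sqrt ∘ (Matrix.posSemidef_conjTranspose_mul_self M).1.eigenvalues) *
      star ((Matrix.posSemidef_conjTranspose_mul_self M).1.eigenvectorUnitary : Matrix (Fin n) (Fin n) ℂ))).trace).re

namespace LyapAux

variable {n : ℕ}

open scoped MatrixOrder

lemma diag_nonneg {M : Matrix (Fin n) (Fin n) ℂ} (hM : M.PosSemidef) (i : Fin n) :
    0 ≤ M i i := by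
  exact hM.diag_nonneg

lemma trace_nonneg' {M : Matrix (Fin n) (Fin n) ℂ} (hM : M.PosSemidef) : 0 ≤ M.trace :=
  Finset.sum_nonneg fun i _ => diag_nonneg hM i

lemma trace_mul_nonneg {P Q : Matrix (Fin n) (Fin n) ℂ} (hP : P.PosSemidef)
    (hQ : Q.PosSemidef) : 0 ≤ (P * Q).trace := by
  have h1 : (P * Q).trace = (CFC.sqrt P * Q * CFC.sqrt P).trace := by
    rw [trace_mul_cycle, mul_assoc, ← mul_assoc, CFC.sqrt_mul_sqrt_self P hP.nonneg]
  have h2 : (CFC.sqrt P * Q * CFC.sqrt P).PosSemidef := by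
    have := hQ.conjTranspose_mul_mul_same (CFC.sqrt P)
    rwa [(CFC.sqrt_nonneg P).posSemidef.1.eq] at this
  rw [h1]; exact trace_nonneg' h2

lemma psd_smul_one_sub {H : Matrix (Fin n) (Fin n) ℂ} (hH : H.PosSemidef) {c : ℝ}
    (hc : ‖H‖ ≤ c) : ((c : ℂ) • 1 - H).PosSemidef := by
  refine PosSemidef.of_dotProduct_mulVec_nonneg ?_ ?_
  · unfold Matrix.IsHermitian
    rw [conjTranspose_sub, conjTranspose_smul, conjTranspose_one, hH.1.eq]
    norm_num
  · intro x
    have hbx : 0 ≤ dotProduct (star x) (H *ᵥ x) := hH.dotProduct_mulVec_nonneg x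
    set y : EuclideanSpace ℂ (Fin n) := WithLp.toLp 2 x with hy
    have key : (dotProduct (star x) (H *ᵥ x)).re ≤ c * ‖y‖ ^ 2 := by
      have h1 : dotProduct (star x) (H *ᵥ x)
          = inner ℂ y ((EuclideanSpace.equiv (Fin n) ℂ).symm (H *ᵥ x)) := by
        rw [hy]; simp [EuclideanSpace.inner_toLp_toLp, dotProduct, mul_comm]
      have h2 : ‖(EuclideanSpace.equiv (Fin n) ℂ).symm (H *ᵥ x)‖ ≤ ‖H‖ * ‖y‖ :=
        H.l2_opNorm_mulVec y
      calc (dotProduct (star x) (H *ᵥ x)).re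
          ≤ ‖(dotProduct (star x) (H *ᵥ x))‖ := Complex.re_le_norm _
        _ = ‖inner ℂ y ((EuclideanSpace.equiv (Fin n) ℂ).symm (H *ᵥ x))‖ := by
            rw [h1]
        _ ≤ ‖y‖ * (‖H‖ * ‖y‖) := by
            have h3 := norm_inner_le_norm (𝕜 := ℂ) y
              ((EuclideanSpace.equiv (Fin n) ℂ).symm (H *ᵥ x))
            refine h3.trans ?_
            gcongr
        _ ≤ ‖y‖ * (c * ‖y‖) := by
            have h4 : (0:ℝ) ≤ ‖y‖ := norm_nonneg _
            gcongr
        _ = c * ‖y‖ ^ 2 := by ring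
    have haxval : dotProduct (star x) x = (‖y‖ : ℂ) ^ 2 := by
      rw [hy, dotProduct_comm, ← EuclideanSpace.inner_toLp_toLp, inner_self_eq_norm_sq_to_K]
      norm_num
    have hcalc : dotProduct (star x) (((c : ℂ) • 1 - H) *ᵥ x)
        = (c : ℂ) * dotProduct (star x) x - dotProduct (star x) (H *ᵥ x) := by
      rw [Matrix.sub_mulVec, dotProduct_sub, Matrix.smul_mulVec,
        Matrix.one_mulVec, dotProduct_smul, smul_eq_mul]
    rw [Complex.nonneg_iff] at hbx
    have hcast : (c:ℂ) * (‖y‖:ℂ)^2 = ((c * ‖y‖^2 : ℝ) : ℂ) := by push_cast; ring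
    rw [hcalc, haxval, hcast, Complex.nonneg_iff]
    constructor
    · simp only [Complex.sub_re, Complex.ofReal_re]
      linarith [key]
    · rw [Complex.sub_im, Complex.ofReal_im, ← hbx.2]
      ring

lemma key_ineq {C B : Matrix (Fin n) (Fin n) ℂ} (hC : C.PosSemidef) (hB : B.PosSemidef)
    {c : ℝ} (hc : ‖C‖ ≤ c) (p m : ℕ) :
    ((C ^ (m + p) * B).trace).re ≤ c ^ p * ((C ^ m * B).trace).re := by
  rcases Nat.eq_zero_or_pos p with hp | hp
  · subst hp; simp
  have hc0 : (0:ℝ) ≤ c := le_trans (norm_nonneg _) hc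
  have hCp : ‖C ^ p‖ ≤ c ^ p :=
    (norm_pow_le' C hp).trans (pow_le_pow_left₀ (norm_nonneg _) hc p)
  set D := CFC.sqrt C with hDdef
  have hD : D.PosSemidef := (CFC.sqrt_nonneg C).posSemidef
  have hD2 : D ^ 2 = C := CFC.sq_sqrt C hC.nonneg
  have hDm : (D ^ m)ᴴ = D ^ m := by rw [conjTranspose_pow, hD.1.eq]
  have hX : (((c ^ p : ℝ) : ℂ) • 1 - C ^ p).PosSemidef := by
    have := psd_smul_one_sub (hC.pow p) hCp
    simpa using this
  have hPSD0 : (D ^ m * ((((c ^ p : ℝ)) : ℂ) • 1 - C ^ p) * D ^ m).PosSemidef := by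
    have := hX.conjTranspose_mul_mul_same (D ^ m)
    rwa [hDm] at this
  have hDD : D ^ m * D ^ m = C ^ m := by
    rw [← pow_add, ← two_mul, pow_mul, hD2]
  have hDP : D ^ m * C ^ p * D ^ m = C ^ (m + p) := by
    rw [← hD2, ← pow_mul, ← pow_add, ← pow_add, ← pow_mul]
    congr 1
    ring
  have hM : D ^ m * ((((c ^ p : ℝ)) : ℂ) • 1 - C ^ p) * D ^ m
      = (((c ^ p : ℝ)) : ℂ) • C ^ m - C ^ (m + p) := by
    rw [mul_sub, sub_mul, mul_smul_comm, smul_mul_assoc, mul_one, hDD, hDP]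
  rw [hM] at hPSD0
  have htr : 0 ≤ (((((c ^ p : ℝ)) : ℂ) • C ^ m - C ^ (m + p)) * B).trace :=
    trace_mul_nonneg hPSD0 hB
  rw [sub_mul, smul_mul_assoc, trace_sub, trace_smul, Complex.nonneg_iff] at htr
  have hre := htr.1
  simp only [Complex.sub_re, Complex.zero_re, smul_eq_mul, Complex.mul_re,
    Complex.ofReal_re, Complex.ofReal_im] at hre
  linarith

/-- `M ↦ (M.trace).re` as a continuous linear map over `ℝ`. -/
noncomputable def traceReCLM : Matrix (Fin n) (Fin n) ℂ →L[ℝ] ℝ :=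
  Complex.reCLM.comp (LinearMap.toContinuousLinearMap
    ((Matrix.traceLinearMap (Fin n) ℂ ℂ).restrictScalars ℝ))

@[simp] lemma traceReCLM_apply (M : Matrix (Fin n) (Fin n) ℂ) :
    traceReCLM M = (M.trace).re := rfl

/-- right multiplication as a continuous linear map -/
noncomputable def mulRightCLM (B : Matrix (Fin n) (Fin n) ℂ) :
    Matrix (Fin n) (Fin n) ℂ →L[ℂ] Matrix (Fin n) (Fin n) ℂ :=
  LinearMap.toContinuousLinearMap (LinearMap.mulRight ℂ B)

@[simp] lemma mulRightCLM_apply (B M : Matrix (Fin n) (Fin n) ℂ) :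
    mulRightCLM B M = M * B := rfl

end LyapAux

open LyapAux

set_option maxHeartbeats 1000000 in
/-- Bound on the trace of the tail of the discrete-time Lyapunov series. -/
theorem discrete_lyapunov_tail_trace_bound {n : ℕ} (A B Sinf : Matrix (Fin n) (Fin n) ℂ)
    (hA : ‖A‖ < 1) (hnormal : A * Aᴴ = Aᴴ * A) (hB : B.PosSemidef)
    (hS : HasSum (fun k : ℕ => A ^ k * B * Aᴴ ^ k) Sinf) (T : ℕ) :
    (Sinf.trace - (∑ k ∈ Finset.range (T+1), A ^ k * B * Aᴴ ^ k).trace).re ≤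
      ‖A‖ ^ (2*(T+1)) * (((1 - Aᴴ * A)⁻¹ * B).trace).re := by
  set C := Aᴴ * A with hCdef
  have hC : C.PosSemidef := posSemidef_conjTranspose_mul_self A
  have hA0 : (0:ℝ) ≤ ‖A‖ := norm_nonneg _
  have hCnorm : ‖C‖ = ‖A‖ * ‖A‖ := A.l2_opNorm_conjTranspose_mul_self
  have hClt : ‖C‖ < 1 := by
    rw [hCnorm]
    nlinarith
  have hCle : ‖C‖ ≤ ‖A‖ ^ 2 := by rw [hCnorm]; ring_nf; rfl
  -- terms as traces of C ^ k * B
  have hterm : ∀ k : ℕ, (A ^ k * B * Aᴴ ^ k).trace = (C ^ k * B).trace := by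
    intro k
    have hcomm : Commute Aᴴ A := hnormal.symm
    rw [trace_mul_cycle, hCdef, hcomm.mul_pow, mul_assoc]
  -- HasSum of the real trace values
  have hf : HasSum (fun k : ℕ => ((C ^ k * B).trace).re) ((Sinf.trace).re) := by
    have := hS.mapL traceReCLM
    simpa [hterm] using this
  -- tail has sum
  have htail : HasSum (fun k : ℕ => ((C ^ (k + (T+1)) * B).trace).re)
      ((Sinf.trace).re - ∑ k ∈ Finset.range (T+1), ((C ^ k * B).trace).re) := by
    refine (hasSum_nat_add_iff (f := fun k : ℕ => ((C ^ k * B).trace).re) (T+1)).mpr ?_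
    simpa using hf
  -- geometric series
  have hgeom : HasSum (fun k : ℕ => C ^ k) (Ring.inverse (1 - C)) :=
    hasSum_geom_series_inverse C hClt
  have hinv : (1 - C)⁻¹ = Ring.inverse (1 - C) := Matrix.nonsing_inv_eq_ringInverse _
  have hg : HasSum (fun k : ℕ => ((C ^ k * B).trace).re) ((((1 - C)⁻¹ * B).trace).re) := by
    have h1 := (hgeom.mapL (mulRightCLM B)).mapL traceReCLM
    rw [hinv]
    simpa using h1
  -- scaled version
  have hg' : HasSum (fun k : ℕ => ‖A‖ ^ (2*(T+1)) * ((C ^ k * B).trace).re)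
      (‖A‖ ^ (2*(T+1)) * (((1 - C)⁻¹ * B).trace).re) := hg.mul_left _
  -- termwise bound
  have hbound : ∀ k : ℕ, ((C ^ (k + (T+1)) * B).trace).re
      ≤ ‖A‖ ^ (2*(T+1)) * ((C ^ k * B).trace).re := by
    intro k
    have := key_ineq hC hB hCle (T+1) k
    calc ((C ^ (k + (T+1)) * B).trace).re
        ≤ (‖A‖ ^ 2) ^ (T+1) * ((C ^ k * B).trace).re := this
      _ = ‖A‖ ^ (2*(T+1)) * ((C ^ k * B).trace).re := by rw [← pow_mul]
  have hle := hasSum_le hbound htail hg'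
  -- rewrite LHS
  have hLHS : (Sinf.trace - (∑ k ∈ Finset.range (T+1), A ^ k * B * Aᴴ ^ k).trace).re
      = (Sinf.trace).re - ∑ k ∈ Finset.range (T+1), ((C ^ k * B).trace).re := by
    rw [Complex.sub_re, trace_sum]
    simp [hterm, Complex.re_sum]
  rw [hLHS]
  exact hle
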